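/- arXiv:1011.1236 — 2 statements merged into one kernel-verified Lean document; each statement's English description precedes it below -/
import Mathlib

section
/- The image of the diagonal in Sym²(S¹) (i.e., the set of singletons {x}) corresponds under the homeomorphism Sym²(S¹) ≅ Möbius band to the boundary circle of the band. -/
/-!
The map `(x, t) ↦ {e^{iπ(x+t)}, e^{iπ(x-t)}}` sends `[0,1]²` onto Sym²(S¹) and identifies
exactly the points `(0, t)` and `(1, 1 - t)`: the product `e^{2πix}` of the pair recovers `x` up to
`0 ~ 1`, and then the sum `2 cos(πt) e^{iπx}` recovers `t`. It therefore induces a continuous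
bijection from the compact Möbius band onto Sym²(S¹), which is Hausdorff because an unordered
pair is determined by its sum and product; so it is a homeomorphism. The edges `t = 0` and
`t = 1` are sent to the pairs `{z, z}`.
-/

/-- Sym²(S¹): the quotient of the torus S¹ × S¹ by the coordinate swap. -/
abbrev SymSqCircle : Type := Quot (fun p q : Circle × Circle => q = (p.2, p.1))

/-- The unit interval [0,1]. -/
abbrev I8 := Set.Icc (0 : ℝ) 1

/-- The Möbius band: the quotient of [0,1]² identifying (0,t) with (1,1−t). -/
abbrev MobiusBand : Type :=
  Quot (fun p q : I8 × I8 => p.1.1 = 0 ∧ q.1.1 = 1 ∧ q.2.1 = 1 - p.2.1)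

/-- The diagonal of Sym²(S¹): the set of singletons {x}. -/
def diag8 : Set SymSqCircle := {s | ∃ x : Circle, s = Quot.mk _ (x, x)}

/-- The boundary circle of the Möbius band: the image of [0,1] × {0,1}. -/
def bdry8 : Set MobiusBand :=
  {m | ∃ p : I8 × I8, (p.2.1 = 0 ∨ p.2.1 = 1) ∧ m = Quot.mk _ p}

open Real Set

theorem circleExp_pi_mul_add_two (s : ℝ) : Circle.exp (π * (s + 2)) = Circle.exp (π * s) := by
  rw [mul_add, mul_comm π 2, Circle.periodic_exp]

theorem coe_circleExp_pi : (Circle.exp π : ℂ) = -1 := by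
  rw [Circle.coe_exp, Complex.exp_pi_mul_I]

theorem cos_pi_mul_injOn : InjOn (fun t => cos (π * t)) (Icc 0 1) := by
  intro t ht t' ht' h
  have hmem : ∀ s ∈ Icc (0 : ℝ) 1, π * s ∈ Icc 0 π := fun s hs =>
    ⟨mul_nonneg pi_pos.le hs.1, mul_le_of_le_one_right pi_pos.le hs.2⟩
  exact mul_left_cancel₀ pi_ne_zero (injOn_cos (hmem t ht) (hmem t' ht') h)

theorem eq_one_sub_of_cos_pi_mul_eq_neg {t t' : ℝ} (ht : t ∈ Icc (0 : ℝ) 1)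
    (ht' : t' ∈ Icc (0 : ℝ) 1) (h : cos (π * t) = -cos (π * t')) : t' = 1 - t := by
  have hcos : cos (π * t) = cos (π * (1 - t')) := by rw [mul_one_sub, cos_pi_sub, h]
  have := cos_pi_mul_injOn ht ⟨by linarith [ht'.2], by linarith [ht'.1]⟩ hcos
  linarith

theorem eq_or_eq_zero_one_of_eq_add_int {x x' : ℝ} (hx : x ∈ Icc (0 : ℝ) 1)
    (hx' : x' ∈ Icc (0 : ℝ) 1) {m : ℤ} (h : x = x' + m) :
    x = x' ∨ (x = 0 ∧ x' = 1) ∨ (x = 1 ∧ x' = 0) := by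
  obtain ⟨⟨hx0, hx1⟩, ⟨hx0', hx1'⟩⟩ := And.intro hx hx'
  have : m ≤ 1 := by exact_mod_cast (show (m : ℝ) ≤ 1 by linarith)
  have : -1 ≤ m := by exact_mod_cast (show (-1 : ℝ) ≤ m by linarith)
  interval_cases m
  · right; left; constructor <;> push_cast at h <;> linarith
  · left; simpa using h
  · right; right; constructor <;> push_cast at h <;> linarith

namespace SymSqCircle

def mk (z w : Circle) : SymSqCircle := Quot.mk _ (z, w)

theorem mk_swap (z w : Circle) : mk z w = mk w z := Quot.sound rfl

theorem mk_surjective : ∀ s : SymSqCircle, ∃ z w, s = mk z w := by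
  rintro ⟨z, w⟩
  exact ⟨z, w, rfl⟩

def symFns : SymSqCircle → ℂ × ℂ :=
  Quot.lift (fun p => (p.1 + p.2, p.1 * p.2)) (by
    rintro ⟨z, w⟩ _ rfl
    simp only [add_comm, mul_comm])

theorem symFns_mk (z w : Circle) : symFns (mk z w) = ((z : ℂ) + w, (z : ℂ) * w) := rfl

theorem continuous_symFns : Continuous symFns :=
  continuous_quot_lift _ (by fun_prop)

theorem symFns_injective : Function.Injective symFns := by
  intro s s' h
  obtain ⟨z, w, rfl⟩ := mk_surjective s
  obtain ⟨z', w', rfl⟩ := mk_surjective s'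
  obtain ⟨hsum, hprod⟩ := Prod.ext_iff.mp h
  simp only [symFns_mk] at hsum hprod
  have hroot : ((z' : ℂ) - z) * ((z' : ℂ) - w) = 0 := by
    linear_combination (-(z' : ℂ)) * hsum + hprod
  rcases mul_eq_zero.mp hroot with h0 | h0
  · obtain rfl : z = z' := Subtype.ext (by linear_combination -h0)
    obtain rfl : w = w' := Subtype.ext (by linear_combination hsum)
    rfl
  · obtain rfl : w = z' := Subtype.ext (by linear_combination -h0)
    obtain rfl : z = w' := Subtype.ext (by linear_combination hsum)
    exact mk_swap _ _

instance : T2Space SymSqCircle := .of_injective_continuous symFns_injective continuous_symFns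

/-- The pair of points at angles `π (x ± t)`: angular midpoint `π x`, half-distance `π t`. -/
noncomputable def ofAngles (x t : ℝ) : SymSqCircle :=
  mk (Circle.exp (π * (x + t))) (Circle.exp (π * (x - t)))

theorem ofAngles_neg (x t : ℝ) : ofAngles x (-t) = ofAngles x t := by
  rw [ofAngles, ofAngles, mk_swap, sub_neg_eq_add, ← sub_eq_add_neg]

theorem periodic_ofAngles_left (t : ℝ) : Function.Periodic (ofAngles · t) 2 := by
  intro x
  simp only [ofAngles, add_right_comm x 2, sub_eq_add_neg, circleExp_pi_mul_add_two]

theorem periodic_ofAngles_right (x : ℝ) : Function.Periodic (ofAngles x) 2 := by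
  intro t
  rw [ofAngles, ofAngles, ← add_assoc, circleExp_pi_mul_add_two, sub_add_eq_sub_sub,
    ← circleExp_pi_mul_add_two (x - t - 2), sub_add_cancel]

theorem ofAngles_add_one_one_sub (x t : ℝ) : ofAngles (x + 1) (1 - t) = ofAngles x t := by
  rw [ofAngles, ofAngles, mk_swap, show x + 1 + (1 - t) = x - t + 2 by ring,
    show x + 1 - (1 - t) = x + t by ring, circleExp_pi_mul_add_two]

theorem continuous_ofAngles : Continuous fun p : ℝ × ℝ => ofAngles p.1 p.2 :=
  continuous_quot_mk.comp (by fun_prop)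

theorem symFns_ofAngles (x t : ℝ) :
    symFns (ofAngles x t) =
      (2 * cos (π * t) * (Circle.exp (π * x) : ℂ), (Circle.exp (π * (2 * x)) : ℂ)) := by
  simp only [ofAngles, symFns_mk, Circle.coe_exp, Complex.ofReal_mul, Complex.ofReal_cos,
    Prod.mk.injEq]
  constructor
  · rw [Complex.two_cos, add_mul, ← Complex.exp_add, ← Complex.exp_add]
    congr 1 <;> congr 1 <;> push_cast <;> ring
  · rw [← Complex.exp_add]
    congr 1
    push_cast
    ring

theorem ofAngles_surjective (s : SymSqCircle) : ∃ x t, s = ofAngles x t := by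
  obtain ⟨z, w, rfl⟩ := mk_surjective s
  obtain ⟨a, rfl⟩ := Circle.exp_surjective z
  obtain ⟨b, rfl⟩ := Circle.exp_surjective w
  refine ⟨(a + b) / (2 * π), (a - b) / (2 * π), ?_⟩
  rw [ofAngles]
  congr 2 <;> field_simp <;> ring

theorem exists_ofAngles_eq_left_mem_Icc (x t : ℝ) :
    ∃ x' ∈ Icc (0 : ℝ) 1, ∃ t', (t' = t ∨ t' = 1 - t) ∧
      ofAngles x t = ofAngles x' t' := by
  obtain ⟨y, ⟨hy0, hy2⟩, hxy⟩ := (periodic_ofAngles_left t).exists_mem_Ico₀ two_pos x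
  rcases le_or_gt y 1 with hy1 | hy1
  · exact ⟨y, ⟨hy0, hy1⟩, t, Or.inl rfl, hxy⟩
  · refine ⟨y - 1, ⟨by linarith, by linarith⟩, 1 - t, Or.inr rfl, ?_⟩
    rw [hxy, ← ofAngles_add_one_one_sub (y - 1) (1 - t), sub_add_cancel, sub_sub_cancel]

theorem exists_ofAngles_eq_mem_Icc (x t : ℝ) :
    ∃ x' ∈ Icc (0 : ℝ) 1, ∃ t' ∈ Icc (0 : ℝ) 1, ofAngles x t = ofAngles x' t' := by
  obtain ⟨u, ⟨hu1, hu2⟩, htu⟩ := (periodic_ofAngles_right x).exists_mem_Ico two_pos t (-1)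
  have habs : ofAngles x u = ofAngles x |u| := by
    rcases abs_choice u with h | h <;> rw [h]
    rw [ofAngles_neg]
  obtain ⟨x', hx', t', ht', he⟩ := exists_ofAngles_eq_left_mem_Icc x |u|
  have hu : |u| ≤ 1 := abs_le.mpr ⟨by linarith, by linarith⟩
  refine ⟨x', hx', t', ?_, htu.trans (habs.trans he)⟩
  rcases ht' with rfl | rfl
  · exact ⟨abs_nonneg u, hu⟩
  · exact ⟨by linarith, by linarith [abs_nonneg u]⟩

theorem ofAngles_eq_ofAngles {x t x' t' : ℝ} (hx : x ∈ Icc (0 : ℝ) 1)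
    (ht : t ∈ Icc (0 : ℝ) 1) (hx' : x' ∈ Icc (0 : ℝ) 1) (ht' : t' ∈ Icc (0 : ℝ) 1)
    (h : ofAngles x t = ofAngles x' t') :
    (x = x' ∧ t = t') ∨ (x = 0 ∧ x' = 1 ∧ t' = 1 - t) ∨
      (x = 1 ∧ x' = 0 ∧ t' = 1 - t) := by
  obtain ⟨hsum, hprod⟩ := Prod.ext_iff.mp (congrArg symFns h)
  simp only [symFns_ofAngles] at hsum hprod
  obtain ⟨m, hm⟩ := Circle.exp_eq_exp.mp (Circle.coe_inj.mp hprod)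
  have hxm : x = x' + m := by nlinarith [pi_pos]
  have hcancel : ∀ {a b : ℝ}, (2 * a : ℂ) = 2 * b → a = b := fun h => by
    exact_mod_cast mul_left_cancel₀ two_ne_zero h
  have hexp : (Circle.exp (π * 0) : ℂ) = 1 ∧ (Circle.exp (π * 1) : ℂ) = -1 := by
    rw [mul_zero, mul_one, Circle.exp_zero, Circle.coe_one, coe_circleExp_pi]
    exact ⟨rfl, rfl⟩
  rcases eq_or_eq_zero_one_of_eq_add_int hx hx' hxm with rfl | ⟨rfl, rfl⟩ | ⟨rfl, rfl⟩
  · refine Or.inl ⟨rfl, cos_pi_mul_injOn ht ht' (hcancel ?_)⟩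
    exact mul_right_cancel₀ (Circle.coe_ne_zero _) hsum
  · refine Or.inr (Or.inl ⟨rfl, rfl, eq_one_sub_of_cos_pi_mul_eq_neg ht ht' (hcancel ?_)⟩)
    rw [hexp.1, hexp.2] at hsum
    rw [Complex.ofReal_neg]
    linear_combination hsum
  · refine Or.inr (Or.inr ⟨rfl, rfl, eq_one_sub_of_cos_pi_mul_eq_neg ht ht' (hcancel ?_)⟩)
    rw [hexp.1, hexp.2] at hsum
    rw [Complex.ofReal_neg]
    linear_combination -hsum

theorem ofAngles_zero_mem_diag8 (x : ℝ) : ofAngles x 0 ∈ diag8 :=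
  ⟨Circle.exp (π * x), by simp only [ofAngles, add_zero, sub_zero]; rfl⟩

theorem ofAngles_one_mem_diag8 (x : ℝ) : ofAngles x 1 ∈ diag8 := by
  refine ⟨Circle.exp (π * (x + 1)), ?_⟩
  rw [ofAngles, ← circleExp_pi_mul_add_two (x - 1), show x - 1 + 2 = x + 1 by ring]
  rfl

theorem exists_ofAngles_zero_of_mem_diag8 {s : SymSqCircle} (hs : s ∈ diag8) :
    ∃ x, s = ofAngles x 0 := by
  obtain ⟨c, rfl⟩ := hs
  obtain ⟨a, rfl⟩ := Circle.exp_surjective c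
  refine ⟨a / π, ?_⟩
  rw [ofAngles, add_zero, sub_zero, mul_div_cancel₀ a pi_ne_zero]
  rfl

end SymSqCircle

namespace MobiusBand

open SymSqCircle

noncomputable def toSymSq : MobiusBand → SymSqCircle :=
  Quot.lift (fun p => ofAngles p.1 p.2) (by
    rintro ⟨⟨x, _⟩, ⟨t, _⟩⟩ ⟨⟨x', _⟩, ⟨t', _⟩⟩ ⟨hx, hx', ht'⟩
    simp only at hx hx' ht' ⊢
    rw [hx, hx', ht', ← ofAngles_add_one_one_sub 0 t, zero_add])

theorem toSymSq_mk (p : I8 × I8) : toSymSq (Quot.mk _ p) = ofAngles p.1 p.2 := rfl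

theorem continuous_toSymSq : Continuous toSymSq :=
  continuous_quot_lift _
    (continuous_ofAngles.comp (continuous_subtype_val.prodMap continuous_subtype_val))

theorem toSymSq_injective : Function.Injective toSymSq := by
  rintro ⟨⟨x, hx⟩, ⟨t, ht⟩⟩ ⟨⟨x', hx'⟩, ⟨t', ht'⟩⟩ h
  rcases ofAngles_eq_ofAngles hx ht hx' ht' h with ⟨rfl, rfl⟩ | hrel | hrel
  · rfl
  · exact Quot.sound hrel
  · obtain ⟨rfl, rfl, rfl⟩ := hrel
    exact (Quot.sound ⟨rfl, rfl, (sub_sub_cancel 1 t).symm⟩).symm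

theorem toSymSq_surjective : Function.Surjective toSymSq := by
  intro s
  obtain ⟨x, t, rfl⟩ := ofAngles_surjective s
  obtain ⟨x', hx', t', ht', he⟩ := exists_ofAngles_eq_mem_Icc x t
  exact ⟨Quot.mk _ (⟨x', hx'⟩, ⟨t', ht'⟩), he.symm⟩

noncomputable def homeomorphSymSq : MobiusBand ≃ₜ SymSqCircle :=
  Continuous.homeoOfEquivCompactToT2
    (f := .ofBijective toSymSq ⟨toSymSq_injective, toSymSq_surjective⟩) continuous_toSymSq

theorem image_toSymSq_bdry8 : toSymSq '' bdry8 = diag8 := by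
  apply subset_antisymm
  · rintro _ ⟨_, ⟨p, ht | ht, rfl⟩, rfl⟩ <;> rw [toSymSq_mk, ht]
    exacts [ofAngles_zero_mem_diag8 _, ofAngles_one_mem_diag8 _]
  · intro s hs
    obtain ⟨x, rfl⟩ := exists_ofAngles_zero_of_mem_diag8 hs
    obtain ⟨x', hx', t', ht', he⟩ := exists_ofAngles_eq_left_mem_Icc x 0
    have ht'I : t' ∈ Icc (0 : ℝ) 1 := by rcases ht' with rfl | rfl <;> norm_num
    refine ⟨Quot.mk _ (⟨x', hx'⟩, ⟨t', ht'I⟩), ⟨_, ?_, rfl⟩, he.symm⟩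
    simpa using ht'

end MobiusBand

/-- There is a homeomorphism Sym²(S¹) ≅ Möbius band carrying the diagonal
onto the boundary circle of the band. -/
theorem stmt8 : ∃ h : SymSqCircle ≃ₜ MobiusBand, h '' diag8 = bdry8 := by
  refine ⟨MobiusBand.homeomorphSymSq.symm, ?_⟩
  rw [← MobiusBand.image_toSymSq_bdry8]
  exact MobiusBand.homeomorphSymSq.toEquiv.symm_image_image bdry8
end

section
/- The map from the quotient of the triangle {(x,y) : 0 ≤ x ≤ y ≤ 1} by the identification (0, x) ∼ (x, 1) to Sym²(S¹) induced by t ↦ exp(2πit) is a homeomorphism. -/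
open Real

/-- The closed triangle {(x,y) : 0 ≤ x ≤ y ≤ 1}. -/
abbrev Tri18 : Type := {p : ℝ × ℝ // 0 ≤ p.1 ∧ p.1 ≤ p.2 ∧ p.2 ≤ 1}

/-- The quotient of the triangle by the identification (0, x) ∼ (x, 1). -/
abbrev TriQuot : Type :=
  Quot (fun p q : Tri18 => p.1.1 = 0 ∧ q.1.1 = p.1.2 ∧ q.1.2 = 1)

/-!
The map is continuous from a compact space to a Hausdorff one, so it is enough that it be
bijective. Sym²(S¹) is Hausdorff because, by Vieta, `{a, b} ↦ (a + b, a b)` is a continuous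
injection into `ℂ × ℂ`. For injectivity, every class of the quotient of the triangle meets the
half-open triangle `y < 1`; there both coordinates lie in `[0, 1)`, where `t ↦ e^{2πit}` is
injective, and since `x ≤ y` the unordered pair `{x, y}` determines the point.
-/

open Function Set

theorem eq_and_eq_or_eq_and_eq_of_add_eq_add_of_mul_eq_mul {R : Type*} [CommRing R]
    [NoZeroDivisors R] {a b c d : R} (hadd : a + b = c + d) (hmul : a * b = c * d) :
    (c = a ∧ d = b) ∨ (c = b ∧ d = a) := by
  have h : (c - a) * (c - b) = 0 := by linear_combination (-c) * hadd + hmul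
  rcases mul_eq_zero.mp h with h | h
  · exact Or.inl ⟨by linear_combination h, by linear_combination -hadd - h⟩
  · exact Or.inr ⟨by linear_combination h, by linear_combination -hadd - h⟩

abbrev SymSq (X : Type*) : Type _ := Quot (fun p q : X × X => q = (p.2, p.1))

namespace SymSq

variable {X R : Type*}

theorem mk_eq_mk_iff {a b c d : X} :
    (Quot.mk _ (a, b) : SymSq X) = Quot.mk _ (c, d) ↔
      (c = a ∧ d = b) ∨ (c = b ∧ d = a) := by
  constructor
  · intro h
    have hequiv : Equivalence (fun p q : X × X => q = p ∨ q = p.swap) :=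
      ⟨fun _ => Or.inl rfl,
        by rintro p q (rfl | rfl) <;> simp,
        by rintro p q r (rfl | rfl) (rfl | rfl) <;> simp⟩
    have := hequiv.eqvGen_iff.mp ((Quot.eqvGen_exact h).mono fun _ _ hpq => Or.inr hpq)
    simpa only [Prod.swap_prod_mk, Prod.mk.injEq] using this
  · rintro (⟨rfl, rfl⟩ | ⟨rfl, rfl⟩)
    · rfl
    · exact Quot.sound rfl

variable [CommRing R] {f : X → R}

def elemSymm (f : X → R) : SymSq X → R × R :=
  Quot.lift (fun p => (f p.1 + f p.2, f p.1 * f p.2)) (by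
    rintro p q rfl
    simp only [add_comm, mul_comm])

theorem continuous_elemSymm [TopologicalSpace X] [TopologicalSpace R] [ContinuousAdd R]
    [ContinuousMul R] (hf : Continuous f) : Continuous (elemSymm f) :=
  continuous_quot_lift _ (by fun_prop)

theorem injective_elemSymm [NoZeroDivisors R] (hf : Injective f) : Injective (elemSymm f) := by
  rintro ⟨a, b⟩ ⟨c, d⟩ h
  obtain ⟨hadd, hmul⟩ := Prod.mk.inj h
  refine mk_eq_mk_iff.mpr ?_
  rcases eq_and_eq_or_eq_and_eq_of_add_eq_add_of_mul_eq_mul hadd hmul with ⟨hc, hd⟩ | ⟨hc, hd⟩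
  · exact Or.inl ⟨hf hc, hf hd⟩
  · exact Or.inr ⟨hf hc, hf hd⟩

theorem t2Space_of_continuous_injective [TopologicalSpace X] [TopologicalSpace R]
    [ContinuousAdd R] [ContinuousMul R] [NoZeroDivisors R] [T2Space R] (hf : Continuous f)
    (hf' : Injective f) : T2Space (SymSq X) :=
  .of_injective_continuous (injective_elemSymm hf') (continuous_elemSymm hf)

end SymSq

instance : T2Space SymSqCircle :=
  SymSq.t2Space_of_continuous_injective continuous_subtype_val Subtype.val_injective

namespace Circle

theorem injOn_exp_two_pi_mul_Ico : InjOn (fun t : ℝ => exp (2 * π * t)) (Ico 0 1) := by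
  have hmaps : MapsTo (2 * π * ·) (Ico (0 : ℝ) 1) (Ico 0 (0 + 2 * π)) := fun t ⟨h0, h1⟩ =>
    ⟨by positivity, by nlinarith [pi_pos]⟩
  exact (exp_injOn_Ico (by simp)).comp ((mul_right_injective₀ two_pi_pos.ne').injOn) hmaps

theorem exists_mem_Ico_exp_two_pi_mul_eq (z : Circle) :
    ∃ t ∈ Ico (0 : ℝ) 1, exp (2 * π * t) = z := by
  obtain ⟨s, rfl⟩ := exp_surjective z
  refine ⟨Int.fract (s / (2 * π)), ⟨Int.fract_nonneg _, Int.fract_lt_one _⟩, ?_⟩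
  have : 2 * π * Int.fract (s / (2 * π)) = s - ⌊s / (2 * π)⌋ * (2 * π) := by
    rw [Int.fract]; field_simp
  rw [this, periodic_exp.sub_int_mul_eq]

end Circle

instance : CompactSpace Tri18 := by
  refine isCompact_iff_compactSpace.mp <|
    (isCompact_Icc (a := ((0 : ℝ), (0 : ℝ))) (b := (1, 1))).of_isClosed_subset ?_ ?_
  · exact (isClosed_le continuous_const continuous_fst).inter
      ((isClosed_le continuous_fst continuous_snd).inter
        (isClosed_le continuous_snd continuous_const))
  · rintro ⟨x, y⟩ ⟨h0, hxy, h1⟩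
    exact ⟨⟨h0, h0.trans hxy⟩, ⟨hxy.trans h1, h1⟩⟩

namespace Tri18

noncomputable def toSymSq (p : Tri18) : SymSqCircle :=
  Quot.mk _ (Circle.exp (2 * π * p.1.1), Circle.exp (2 * π * p.1.2))

theorem toSymSq_eq_of_rel {p q : Tri18} (h : p.1.1 = 0 ∧ q.1.1 = p.1.2 ∧ q.1.2 = 1) :
    p.toSymSq = q.toSymSq := by
  obtain ⟨⟨x, y⟩, hp⟩ := p
  obtain ⟨⟨x', y'⟩, hq⟩ := q
  obtain ⟨rfl, rfl, rfl⟩ := h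
  refine SymSq.mk_eq_mk_iff.mpr (Or.inr ⟨rfl, ?_⟩)
  simp

theorem eq_of_toSymSq_eq {p q : Tri18} (hp : p.1.2 < 1) (hq : q.1.2 < 1)
    (h : p.toSymSq = q.toSymSq) : p = q := by
  have mem_fst {r : Tri18} (hr : r.1.2 < 1) : r.1.1 ∈ Ico (0 : ℝ) 1 :=
    ⟨r.2.1, r.2.2.1.trans_lt hr⟩
  have mem_snd {r : Tri18} (hr : r.1.2 < 1) : r.1.2 ∈ Ico (0 : ℝ) 1 := ⟨r.2.1.trans r.2.2.1, hr⟩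
  have inj := Circle.injOn_exp_two_pi_mul_Ico
  rcases SymSq.mk_eq_mk_iff.mp h with ⟨h1, h2⟩ | ⟨h1, h2⟩
  · exact Subtype.ext (Prod.ext (inj (mem_fst hq) (mem_fst hp) h1).symm
      (inj (mem_snd hq) (mem_snd hp) h2).symm)
  · have h1 : q.1.1 = p.1.2 := inj (mem_fst hq) (mem_snd hp) h1
    have h2 : q.1.2 = p.1.1 := inj (mem_snd hq) (mem_fst hp) h2
    exact Subtype.ext (Prod.ext (by linarith [p.2.2.1, q.2.2.1]) (by linarith [p.2.2.1, q.2.2.1]))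

/-- A representative of the class of `p` with `y < 1`; `Int.fract` sends the corner `(1, 1)`
to `(0, 0)`. -/
noncomputable def reduce (p : Tri18) : Tri18 :=
  if p.1.2 = 1 then ⟨(0, Int.fract p.1.1), le_rfl, Int.fract_nonneg _, (Int.fract_lt_one _).le⟩
  else p

theorem reduce_snd_lt_one (p : Tri18) : p.reduce.1.2 < 1 := by
  unfold reduce
  split_ifs with h
  · exact Int.fract_lt_one _
  · exact lt_of_le_of_ne p.2.2.2 h

theorem mk_reduce (p : Tri18) : (Quot.mk _ p.reduce : TriQuot) = Quot.mk _ p := by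
  obtain ⟨⟨x, y⟩, hx, hxy, hy⟩ := p
  unfold reduce
  split_ifs with h
  · obtain rfl : y = 1 := h
    rcases (show x ≤ 1 from hxy).lt_or_eq with hx1 | rfl
    · refine Quot.sound ⟨rfl, ?_, rfl⟩
      exact (Int.fract_eq_self.mpr ⟨hx, hx1⟩).symm
    · have corner : (Quot.mk _ ⟨(0, 0), le_rfl, le_rfl, zero_le_one⟩ : TriQuot) =
          Quot.mk _ ⟨(0, 1), le_rfl, zero_le_one, le_rfl⟩ := Quot.sound ⟨rfl, rfl, rfl⟩
      simpa using corner.trans (Quot.sound ⟨rfl, rfl, rfl⟩)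
  · rfl

end Tri18

namespace TriQuot

noncomputable def toSymSq : TriQuot → SymSqCircle :=
  Quot.lift Tri18.toSymSq fun _ _ => Tri18.toSymSq_eq_of_rel

theorem continuous_toSymSq : Continuous toSymSq :=
  continuous_quot_lift _ (continuous_quot_mk.comp (by fun_prop))

theorem injective_toSymSq : Injective toSymSq := by
  rintro ⟨p⟩ ⟨q⟩ h
  rw [← p.mk_reduce, ← q.mk_reduce] at h ⊢
  exact congrArg _ (Tri18.eq_of_toSymSq_eq p.reduce_snd_lt_one q.reduce_snd_lt_one h)

theorem surjective_toSymSq : Surjective toSymSq := by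
  rintro ⟨a, b⟩
  obtain ⟨s, ⟨hs0, hs1⟩, rfl⟩ := Circle.exists_mem_Ico_exp_two_pi_mul_eq a
  obtain ⟨t, ⟨ht0, ht1⟩, rfl⟩ := Circle.exists_mem_Ico_exp_two_pi_mul_eq b
  rcases le_total s t with hst | hts
  · exact ⟨Quot.mk _ ⟨(s, t), hs0, hst, ht1.le⟩, rfl⟩
  · exact ⟨Quot.mk _ ⟨(t, s), ht0, hts, hs1.le⟩, SymSq.mk_eq_mk_iff.mpr (Or.inr ⟨rfl, rfl⟩)⟩

end TriQuot

/-- The map (x,y) ↦ [e^{2πix}, e^{2πiy}] descends to a homeomorphism from the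
triangle with (0,x) ∼ (x,1) identified onto Sym²(S¹). -/
theorem stmt18 :
    ∃ h : TriQuot ≃ₜ SymSqCircle,
      ∀ p : Tri18,
        h (Quot.mk _ p) =
          Quot.mk _ (Circle.exp (2 * π * p.1.1), Circle.exp (2 * π * p.1.2)) :=
  ⟨TriQuot.continuous_toSymSq.homeoOfEquivCompactToT2
      (f := .ofBijective _ ⟨TriQuot.injective_toSymSq, TriQuot.surjective_toSymSq⟩),
    fun _ => rfl⟩
end
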